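/- Let k ≥ 0 and let f be the 'good sections' function on (2k+1)^2 variables (f(w)=1 iff some section is good, where a section is good if it equals exactly one pair x_{2i-1}=x_{2i}=1, 1 ≤ i ≤ k, with all other section bits 0, or exactly x_{2k+1}=1 with all others 0). Then bs(f) = (1/2)·s(f)^2 + (1/2)·s(f). -/

import Mathlib

def flipS {n : ℕ} (w : Fin n → Bool) (S : Finset (Fin n)) : Fin n → Bool :=
  fun i => if i ∈ S then !(w i) else w i

def sensAt {n : ℕ} (f : (Fin n → Bool) → Bool) (w : Fin n → Bool) : ℕ :=
  (Finset.univ.filter (fun i => f (flipS w {i}) ≠ f w)).card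

def sens {n : ℕ} (f : (Fin n → Bool) → Bool) : ℕ :=
  Finset.univ.sup (fun w => sensAt f w)

noncomputable def bsAt {n : ℕ} (f : (Fin n → Bool) → Bool) (w : Fin n → Bool) : ℕ :=
  sSup {k | ∃ B : Fin k → Finset (Fin n), (∀ j, (B j).Nonempty) ∧
    (∀ j₁ j₂, j₁ ≠ j₂ → Disjoint (B j₁) (B j₂)) ∧ (∀ j, f (flipS w (B j)) ≠ f w)}

noncomputable def bs {n : ℕ} (f : (Fin n → Bool) → Bool) : ℕ :=
  Finset.univ.sup (fun w => bsAt f w)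
def secIdx (k : ℕ) (s p : Fin (2*k+1)) : Fin ((2*k+1)^2) :=
  ⟨s.val * (2*k+1) + p.val, by have := s.isLt; have := p.isLt; nlinarith⟩

def sectionOf (k : ℕ) (w : Fin ((2*k+1)^2) → Bool) (s : Fin (2*k+1)) : Fin (2*k+1) → Bool :=
  fun p => w (secIdx k s p)

def goodSection (k : ℕ) (x : Fin (2*k+1) → Bool) : Prop :=
  (∃ i < k, ∀ j : Fin (2*k+1), x j = decide (j.val = 2*i ∨ j.val = 2*i+1)) ∨
  (∀ j : Fin (2*k+1), x j = decide (j.val = 2*k))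

instance (k : ℕ) (x : Fin (2*k+1) → Bool) : Decidable (goodSection k x) := by
  unfold goodSection; infer_instance

def goodF (k : ℕ) : (Fin ((2*k+1)^2) → Bool) → Bool :=
  fun w => decide (∃ s : Fin (2*k+1), goodSection k (sectionOf k w s))

/-!
The good words of a section are pairwise at Hamming distance at least 3. If `f w = 1`,
every sensitive block must meet a fixed good section, so there are at most `2k+1` of them.
If `f w = 0`, a sensitive block turns some section `s` into some good word `a`, and its
trace on `s` is then determined by `(s, a)`; so disjoint sensitive blocks number at most
`(2k+1)(k+1)`, and each section holds at most one sensitive bit, since no word is at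
distance 1 from two good words. The bounds are attained at the all-zero input (write any
good word into any section) and at the input whose first section is the one-bit good word
and which is zero elsewhere (every bit of that section is sensitive). Hence `s(f) = 2k+1`
and `bs(f) = (2k+1)(k+1) = s(f)(s(f)+1)/2`.
-/

open Finset

section Flip

variable {n : ℕ}

def diffSet (x y : Fin n → Bool) : Finset (Fin n) := {i | x i ≠ y i}

lemma card_diffSet (x y : Fin n → Bool) : #(diffSet x y) = hammingDist x y := rfl

lemma flipS_eq_iff {x y : Fin n → Bool} {D : Finset (Fin n)} :
    flipS x D = y ↔ D = diffSet x y := by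
  simp only [funext_iff, Finset.ext_iff, flipS, diffSet, mem_filter, mem_univ, true_and]
  refine forall_congr' fun i => ?_
  by_cases h : i ∈ D <;> cases x i <;> cases y i <;> simp [h]

lemma flipS_injective (x : Fin n → Bool) : Function.Injective (flipS x) :=
  fun _ _ h => (flipS_eq_iff.1 h).trans (flipS_eq_iff.1 rfl).symm

lemma hammingDist_flipS (x : Fin n → Bool) (D : Finset (Fin n)) :
    hammingDist x (flipS x D) = #D := by
  rw [← card_diffSet, ← flipS_eq_iff.1 rfl]

end Flip

section Code

variable {n : ℕ} {C : Set (Fin n → Bool)}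

lemma flipS_singleton_notMem (hC : C.Pairwise fun g g' => 2 ≤ hammingDist g g')
    {g : Fin n → Bool} (hg : g ∈ C) (p : Fin n) : flipS g {p} ∉ C := by
  intro hflip
  have hdist := hammingDist_flipS g {p}
  rw [card_singleton] at hdist
  by_cases hfix : g = flipS g {p}
  · rw [← hfix, hammingDist_self] at hdist
    omega
  · have := hC hg hflip hfix
    omega

lemma eq_of_flipS_singleton_mem (hC : C.Pairwise fun g g' => 3 ≤ hammingDist g g')
    {x : Fin n → Bool} {p q : Fin n} (hp : flipS x {p} ∈ C) (hq : flipS x {q} ∈ C) :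
    p = q := by
  suffices flipS x {p} = flipS x {q} from singleton_injective (flipS_injective x this)
  by_contra hne
  have hfar := hC hp hq hne
  have hnear := hammingDist_triangle (flipS x {p}) x (flipS x {q})
  simp only [hammingDist_comm (flipS x {p}) x, hammingDist_flipS, card_singleton] at hnear
  omega

end Code

section BlockSensitivity

variable {n : ℕ} {f : (Fin n → Bool) → Bool} {w : Fin n → Bool}

lemma card_le_of_pairwise_disjoint_of_forall_exists_mem {α : Type*} {m : ℕ}
    {B : Fin m → Finset α} {T : Finset α}
    (hdisj : ∀ j₁ j₂, j₁ ≠ j₂ → Disjoint (B j₁) (B j₂)) (hT : ∀ j, ∃ x ∈ T, x ∈ B j) :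
    m ≤ #T := by
  choose φ hφT hφB using hT
  have hinj : Set.InjOn φ (univ : Finset (Fin m)) := by
    intro j _ j' _ h
    by_contra hne
    exact disjoint_left.1 (hdisj j j' hne) (hφB j) (h ▸ hφB j')
  simpa using card_le_card_of_injOn φ (fun j _ => hφT j) hinj

lemma bddAbove_bsAt_set : BddAbove {m | ∃ B : Fin m → Finset (Fin n), (∀ j, (B j).Nonempty) ∧
    (∀ j₁ j₂, j₁ ≠ j₂ → Disjoint (B j₁) (B j₂)) ∧ (∀ j, f (flipS w (B j)) ≠ f w)} := by
  refine ⟨n, fun m ⟨B, hne, hdisj, _⟩ => ?_⟩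
  simpa using card_le_of_pairwise_disjoint_of_forall_exists_mem (T := univ) hdisj
    fun j => (hne j).imp fun x hx => ⟨mem_univ x, hx⟩

lemma le_bsAt {m : ℕ} (B : Fin m → Finset (Fin n)) (hne : ∀ j, (B j).Nonempty)
    (hdisj : ∀ j₁ j₂, j₁ ≠ j₂ → Disjoint (B j₁) (B j₂)) (hsens : ∀ j, f (flipS w (B j)) ≠ f w) :
    m ≤ bsAt f w :=
  le_csSup bddAbove_bsAt_set ⟨B, hne, hdisj, hsens⟩

lemma bsAt_le {M : ℕ} (h : ∀ m (B : Fin m → Finset (Fin n)), (∀ j, (B j).Nonempty) →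
    (∀ j₁ j₂, j₁ ≠ j₂ → Disjoint (B j₁) (B j₂)) → (∀ j, f (flipS w (B j)) ≠ f w) → m ≤ M) :
    bsAt f w ≤ M :=
  csSup_le ⟨0, Fin.elim0, (·.elim0), (·.elim0), (·.elim0)⟩ fun m ⟨B, hne, hdisj, hsens⟩ =>
    h m B hne hdisj hsens

lemma sensAt_le_bsAt : sensAt f w ≤ bsAt f w := by
  set S := univ.filter fun i => f (flipS w {i}) ≠ f w
  refine le_bsAt (fun j => {(S.equivFin.symm j : Fin n)}) (fun _ => singleton_nonempty _) ?_
    fun j => (mem_filter.1 (S.equivFin.symm j).2).2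
  intro j₁ j₂ hne
  exact disjoint_singleton.2 fun h => hne (S.equivFin.symm.injective (Subtype.ext h))

end BlockSensitivity

section Sections

variable {k : ℕ}

def secEquiv (k : ℕ) : Fin (2*k+1) × Fin (2*k+1) ≃ Fin ((2*k+1)^2) :=
  finProdFinEquiv.trans (finCongr (sq _).symm)

lemma secEquiv_apply (s p : Fin (2*k+1)) : secEquiv k (s, p) = secIdx k s p := by
  ext
  simp only [secEquiv, Equiv.trans_apply, finProdFinEquiv_apply_val, finCongr_apply,
    Fin.val_cast, secIdx]
  ring

lemma secIdx_inj {s s' p p' : Fin (2*k+1)} :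
    secIdx k s p = secIdx k s' p' ↔ s = s' ∧ p = p' := by
  rw [← secEquiv_apply, ← secEquiv_apply, (secEquiv k).apply_eq_iff_eq, Prod.mk.injEq]

lemma exists_secIdx_eq (i : Fin ((2*k+1)^2)) : ∃ s p, secIdx k s p = i :=
  ⟨_, _, (secEquiv_apply _ _).symm.trans ((secEquiv k).apply_symm_apply i)⟩

def sectionSet (k : ℕ) (S : Finset (Fin ((2*k+1)^2))) (s : Fin (2*k+1)) :
    Finset (Fin (2*k+1)) :=
  {p | secIdx k s p ∈ S}

lemma mem_sectionSet {S : Finset (Fin ((2*k+1)^2))} {s p : Fin (2*k+1)} :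
    p ∈ sectionSet k S s ↔ secIdx k s p ∈ S := by
  simp [sectionSet]

lemma sectionOf_flipS (w : Fin ((2*k+1)^2) → Bool) (S : Finset (Fin ((2*k+1)^2)))
    (s : Fin (2*k+1)) :
    sectionOf k (flipS w S) s = flipS (sectionOf k w s) (sectionSet k S s) := by
  funext p
  simp [sectionOf, flipS, sectionSet]

lemma sectionOf_flipS_of_forall_notMem {w : Fin ((2*k+1)^2) → Bool}
    {S : Finset (Fin ((2*k+1)^2))} {s : Fin (2*k+1)} (h : ∀ p, secIdx k s p ∉ S) :
    sectionOf k (flipS w S) s = sectionOf k w s := by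
  funext p
  simp [sectionOf, flipS, h]

lemma sectionOf_flipS_secIdx (w : Fin ((2*k+1)^2) → Bool) (s p : Fin (2*k+1)) :
    sectionOf k (flipS w {secIdx k s p}) s = flipS (sectionOf k w s) {p} := by
  funext q
  simp [sectionOf, flipS, secIdx_inj]

end Sections

section GoodSections

variable {k : ℕ}

/-- The pair `{2a, 2a+1}` for `a < k`, and the single bit `2k` for `a = k`. -/
def goodPattern (k : ℕ) (a : Fin (k+1)) : Fin (2*k+1) → Bool :=
  fun p => decide (p.val / 2 = a.val)

lemma goodSection_iff {x : Fin (2*k+1) → Bool} :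
    goodSection k x ↔ ∃ a : Fin (k+1), x = goodPattern k a := by
  unfold goodSection goodPattern
  constructor
  · rintro (⟨i, hi, h⟩ | h)
    · exact ⟨⟨i, by omega⟩, funext fun j => by rw [h j, decide_eq_decide]; dsimp only; omega⟩
    · exact ⟨Fin.last k, funext fun j => by rw [h j, decide_eq_decide, Fin.val_last]; omega⟩
  · rintro ⟨a, rfl⟩
    rcases (Nat.lt_succ_iff.1 a.isLt).lt_or_eq with ha | ha
    · exact Or.inl ⟨a, ha, fun j => by rw [decide_eq_decide]; omega⟩
    · exact Or.inr fun j => by rw [decide_eq_decide]; omega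

lemma three_le_hammingDist_goodPattern {a a' : Fin (k+1)} (h : a ≠ a') :
    3 ≤ hammingDist (goodPattern k a) (goodPattern k a') := by
  wlog hlt : a < a' generalizing a a'
  · rw [hammingDist_comm]
    exact this h.symm (lt_of_le_of_ne (not_lt.1 hlt) h.symm)
  have ha : 2 * a.val + 1 < 2 * k + 1 := by omega
  calc 3 = #({⟨2 * a, by omega⟩, ⟨2 * a + 1, ha⟩, ⟨2 * a', by omega⟩} : Finset (Fin (2*k+1))) := by
        rw [card_insert_of_notMem, card_insert_of_notMem, card_singleton] <;>
          simp only [mem_insert, mem_singleton, Fin.ext_iff, not_or] <;> omega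
    _ ≤ hammingDist (goodPattern k a) (goodPattern k a') := by
        rw [← card_diffSet]
        refine card_le_card fun j hj => ?_
        simp only [mem_insert, mem_singleton] at hj
        simp only [diffSet, goodPattern, mem_filter, mem_univ, true_and, ne_eq, decide_eq_decide]
        rcases hj with rfl | rfl | rfl <;> dsimp only <;> omega

lemma pairwise_three_le_hammingDist_goodSection :
    {x | goodSection k x}.Pairwise fun g g' => 3 ≤ hammingDist g g' := by
  rintro _ hg _ hg' hne
  obtain ⟨a, rfl⟩ := goodSection_iff.1 hg
  obtain ⟨a', rfl⟩ := goodSection_iff.1 hg'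
  exact three_le_hammingDist_goodPattern fun h => hne (h ▸ rfl)

lemma not_goodSection_false : ¬ goodSection k fun _ => false := by
  rw [goodSection_iff]
  rintro ⟨a, ha⟩
  simpa [goodPattern] using congrFun ha ⟨2 * a, by omega⟩

end GoodSections

section GoodF

variable {k : ℕ} {w : Fin ((2*k+1)^2) → Bool}

lemma goodF_eq_true_iff : goodF k w = true ↔ ∃ s, goodSection k (sectionOf k w s) := by
  simp [goodF]

lemma goodF_eq_false_iff : goodF k w = false ↔ ∀ s, ¬ goodSection k (sectionOf k w s) := by
  simp [goodF]

lemma bsAt_goodF_le_of_true (hw : goodF k w = true) : bsAt (goodF k) w ≤ 2*k+1 := by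
  obtain ⟨s, hs⟩ := goodF_eq_true_iff.1 hw
  refine bsAt_le fun m B _ hdisj hsens => ?_
  have hmeet : ∀ j, ∃ i ∈ univ.image (secIdx k s), i ∈ B j := by
    intro j
    by_contra! hmiss
    refine hsens j ((goodF_eq_true_iff.2 ⟨s, ?_⟩).trans hw.symm)
    rwa [sectionOf_flipS_of_forall_notMem fun p => hmiss _ (mem_image_of_mem _ (mem_univ p))]
  calc m ≤ #(univ.image (secIdx k s)) :=
        card_le_of_pairwise_disjoint_of_forall_exists_mem hdisj hmeet
    _ ≤ 2*k+1 := card_image_le.trans (by simp)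

lemma bsAt_goodF_le_of_false (hw : goodF k w = false) :
    bsAt (goodF k) w ≤ (2*k+1)*(k+1) := by
  refine bsAt_le fun m B _ hdisj hsens => ?_
  have hhit : ∀ j, ∃ (s : Fin (2*k+1)) (a : Fin (k+1)),
      sectionSet k (B j) s = diffSet (sectionOf k w s) (goodPattern k a) := by
    intro j
    obtain ⟨s, hs⟩ := goodF_eq_true_iff.1 (by simpa [hw] using hsens j)
    obtain ⟨a, ha⟩ := goodSection_iff.1 (sectionOf_flipS w (B j) s ▸ hs)
    exact ⟨s, a, flipS_eq_iff.1 ha⟩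
  choose σ α hσα using hhit
  have hinj : Function.Injective fun j => (σ j, α j) := by
    intro j j' h
    obtain ⟨hs, ha⟩ := Prod.mk.inj h
    by_contra hne
    have hbad : sectionOf k w (σ j) ≠ goodPattern k (α j) := fun h =>
      goodF_eq_false_iff.1 hw _ (goodSection_iff.2 ⟨_, h⟩)
    obtain ⟨p, hp⟩ : (diffSet (sectionOf k w (σ j)) (goodPattern k (α j))).Nonempty :=
      card_pos.1 (hammingDist_pos.2 hbad)
    have hp' : p ∈ sectionSet k (B j') (σ j) := by
      rwa [hs, hσα j', ← hs, ← ha]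
    rw [← hσα j] at hp
    exact disjoint_left.1 (hdisj j j' hne) (mem_sectionSet.1 hp) (mem_sectionSet.1 hp')
  simpa using Fintype.card_le_of_injective _ hinj

def patternBlock (k : ℕ) (s : Fin (2*k+1)) (a : Fin (k+1)) : Finset (Fin ((2*k+1)^2)) :=
  {i | ∃ p, goodPattern k a p ∧ secIdx k s p = i}

lemma sectionOf_flipS_patternBlock (s : Fin (2*k+1)) (a : Fin (k+1)) :
    sectionOf k (flipS (fun _ => false) (patternBlock k s a)) s = goodPattern k a := by
  funext p
  simp [sectionOf, flipS, patternBlock, secIdx_inj]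

lemma patternBlock_nonempty (s : Fin (2*k+1)) (a : Fin (k+1)) : (patternBlock k s a).Nonempty :=
  ⟨secIdx k s ⟨2 * a, by omega⟩, by
    simp only [patternBlock, mem_filter, mem_univ, true_and]
    exact ⟨_, by simp [goodPattern], rfl⟩⟩

lemma disjoint_patternBlock {s s' : Fin (2*k+1)} {a a' : Fin (k+1)} (h : (s, a) ≠ (s', a')) :
    Disjoint (patternBlock k s a) (patternBlock k s' a') := by
  rw [disjoint_left]
  intro i hi hi'
  simp only [patternBlock, mem_filter, mem_univ, true_and] at hi hi'
  obtain ⟨p, hp, rfl⟩ := hi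
  obtain ⟨p', hp', he⟩ := hi'
  obtain ⟨rfl, rfl⟩ := secIdx_inj.1 he
  simp only [goodPattern, decide_eq_true_eq] at hp hp'
  exact h (by rw [Fin.ext (hp'.symm.trans hp)])

lemma le_bsAt_goodF_false : (2*k+1)*(k+1) ≤ bsAt (goodF k) fun _ => false := by
  have hzero : goodF k (fun _ => false) = false :=
    goodF_eq_false_iff.2 fun _ => not_goodSection_false
  refine le_bsAt (fun j => patternBlock k (finProdFinEquiv.symm j).1 (finProdFinEquiv.symm j).2)
    (fun _ => patternBlock_nonempty _ _) ?_ fun j => ?_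
  · exact fun j j' hne => disjoint_patternBlock (finProdFinEquiv.symm.injective.ne hne)
  · rw [hzero, ne_eq, Bool.not_eq_false, goodF_eq_true_iff]
    exact ⟨_, sectionOf_flipS_patternBlock _ _ ▸ goodSection_iff.2 ⟨_, rfl⟩⟩

lemma goodSection_flipS_of_goodF_flipS (hw : goodF k w = false) {s p : Fin (2*k+1)}
    (hflip : goodF k (flipS w {secIdx k s p}) = true) :
    goodSection k (flipS (sectionOf k w s) {p}) := by
  obtain ⟨s', hs'⟩ := goodF_eq_true_iff.1 hflip
  by_cases h : s' = s
  · subst h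
    rwa [sectionOf_flipS_secIdx] at hs'
  · rw [sectionOf_flipS_of_forall_notMem (by simp [secIdx_inj, h])] at hs'
    exact absurd hs' (goodF_eq_false_iff.1 hw s')

lemma sensAt_goodF_le_of_false (hw : goodF k w = false) : sensAt (goodF k) w ≤ 2*k+1 := by
  refine (card_le_card_of_injOn (fun i => ((secEquiv k).symm i).1)
    (fun _ _ => mem_univ _) ?_).trans (by simp)
  intro i hi i' hi' hsec
  obtain ⟨s, p, rfl⟩ := exists_secIdx_eq i
  obtain ⟨s', p', rfl⟩ := exists_secIdx_eq i'
  simp only [← secEquiv_apply, Equiv.symm_apply_apply] at hsec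
  subst hsec
  simp only [coe_filter, mem_univ, true_and, Set.mem_ofPred_eq, hw, ne_eq,
    Bool.not_eq_false] at hi hi'
  rw [eq_of_flipS_singleton_mem pairwise_three_le_hammingDist_goodSection
    (goodSection_flipS_of_goodF_flipS hw hi) (goodSection_flipS_of_goodF_flipS hw hi')]

def lastPatternInput (k : ℕ) : Fin ((2*k+1)^2) → Bool :=
  fun i => decide (i = secIdx k 0 (Fin.last (2*k)))

lemma sectionOf_lastPatternInput (s : Fin (2*k+1)) :
    sectionOf k (lastPatternInput k) s =
      if s = 0 then goodPattern k (Fin.last k) else fun _ => false := by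
  funext p
  simp only [sectionOf, lastPatternInput, secIdx_inj]
  split_ifs with h
  · simp only [h, true_and, goodPattern, decide_eq_decide, Fin.ext_iff (a := p), Fin.val_last]
    omega
  · simp [h]

lemma le_sensAt_goodF_lastPatternInput : 2*k+1 ≤ sensAt (goodF k) (lastPatternInput k) := by
  have hgood : goodSection k (sectionOf k (lastPatternInput k) 0) := by
    rw [sectionOf_lastPatternInput, if_pos rfl]
    exact goodSection_iff.2 ⟨_, rfl⟩
  have hw : goodF k (lastPatternInput k) = true := goodF_eq_true_iff.2 ⟨0, hgood⟩
  have hflip (p : Fin (2*k+1)) : goodF k (flipS (lastPatternInput k) {secIdx k 0 p}) = false := by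
    refine goodF_eq_false_iff.2 fun s => ?_
    by_cases hs : s = 0
    · subst hs
      rw [sectionOf_flipS_secIdx]
      exact flipS_singleton_notMem
        (pairwise_three_le_hammingDist_goodSection.mono' fun _ _ h => by omega) hgood p
    · rw [sectionOf_flipS_of_forall_notMem (by simp [secIdx_inj, hs]),
        sectionOf_lastPatternInput, if_neg hs]
      exact not_goodSection_false
  calc 2*k+1 = #(univ.image (secIdx k 0)) := by
        rw [card_image_of_injective _ fun p p' h => (secIdx_inj.1 h).2]
        simp
    _ ≤ sensAt (goodF k) (lastPatternInput k) := card_le_card fun i hi => by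
        obtain ⟨p, -, rfl⟩ := mem_image.1 hi
        simp [hw, hflip]

lemma sens_goodF : sens (goodF k) = 2*k+1 := by
  refine le_antisymm (Finset.sup_le fun w _ => ?_) ?_
  · cases hw : goodF k w
    · exact sensAt_goodF_le_of_false hw
    · exact sensAt_le_bsAt.trans (bsAt_goodF_le_of_true hw)
  · exact le_sensAt_goodF_lastPatternInput.trans
      (le_sup (f := sensAt (goodF k)) (mem_univ _))

lemma bs_goodF : bs (goodF k) = (2*k+1)*(k+1) := by
  refine le_antisymm (Finset.sup_le fun w _ => ?_) ?_
  · cases hw : goodF k w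
    · exact bsAt_goodF_le_of_false hw
    · exact (bsAt_goodF_le_of_true hw).trans (Nat.le_mul_of_pos_right _ k.succ_pos)
  · exact le_bsAt_goodF_false.trans (le_sup (f := bsAt (goodF k)) (mem_univ _))

end GoodF

theorem stmt7 (k : ℕ) :
    (bs (goodF k) : ℚ) = (1/2) * (sens (goodF k))^2 + (1/2) * (sens (goodF k)) := by
  rw [bs_goodF, sens_goodF]
  push_cast
  ring
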